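/- arXiv:cs/0102009 — 4 statements merged into one kernel-verified Lean document; each statement's English description precedes it below -/
import Mathlib

section
/- Let G=(A,B,E) be a bipartite graph and let Y1, Y2 be a legal pair of pendant blocks of G such that Y1 and Y2 are not the two singleton blocks formed by the endpoints of an isolated-edge connected component. Then there exists a binding edge for Y1 and Y2, i.e., a legal edge of G joining a noncut vertex of Y1 to a noncut vertex of Y2. -/
/-!
Every pendant block contains a vertex that is not a cut vertex, and the type condition of a
legal pair yields such vertices `a ∈ A` and `b ∈ B` lying in different blocks of the pair.
They cannot be adjacent: since `a` is not a cut vertex, a neighbour `c ≠ b` of `a` would give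
a path from `a` to `b` avoiding the edge `ab`, making `a` and `b` biconnected and forcing `b`
into the block of `a`. So an edge `ab` would be a whole connected component with the two
singleton blocks `{a}` and `{b}`, which is excluded; hence `ab` is a binding edge.
-/

open SimpleGraph

namespace AugBic

noncomputable section

variable {V : Type*}

/-- Two vertices are biconnected: they are in the same connected component and remain so
after the removal of any single edge or any single vertex other than either of them. -/
def BiconnPair (G : SimpleGraph V) (u v : V) : Prop :=
  G.Reachable u v ∧
  (∀ e ∈ G.edgeSet, (G.deleteEdges {e}).Reachable u v) ∧
  (∀ w : V, ∀ hu : u ≠ w, ∀ hv : v ≠ w,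
    (G.induce {x | x ≠ w}).Reachable ⟨u, hu⟩ ⟨v, hv⟩)

/-- A set of vertices is biconnected if every pair of its vertices is biconnected. -/
def BiconnSet (G : SimpleGraph V) (S : Set V) : Prop :=
  ∀ u ∈ S, ∀ v ∈ S, BiconnPair G u v

/-- A block: (the induced subgraph on) a maximal biconnected set of vertices. -/
def IsBlock (G : SimpleGraph V) (S : Set V) : Prop :=
  S.Nonempty ∧ BiconnSet G S ∧ ∀ T : Set V, S ⊆ T → BiconnSet G T → T = S

/-- A cut vertex: its removal increases the number of connected components. -/
def IsCutVertex (G : SimpleGraph V) (v : V) : Prop :=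
  Nat.card G.ConnectedComponent <
    Nat.card ((G.induce {x | x ≠ v}).ConnectedComponent)

/-- A cut edge: its removal increases the number of connected components. -/
def IsCutEdge (G : SimpleGraph V) (e : Sym2 V) : Prop :=
  e ∈ G.edgeSet ∧
    Nat.card G.ConnectedComponent <
      Nat.card ((G.deleteEdges {e}).ConnectedComponent)

/-- A pendant block: a singular block consisting of a vertex of degree 1, or a
nonsingular block containing exactly one cut vertex. -/
def IsPendantBlock (G : SimpleGraph V) (S : Set V) : Prop :=
  IsBlock G S ∧
    ((∃ v, S = {v} ∧ (G.neighborSet v).ncard = 1) ∨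
     (1 < S.ncard ∧ ∃! v, v ∈ S ∧ IsCutVertex G v))

/-- Λ(G): the set of pendant blocks of `G`. -/
def pendantBlocks (G : SimpleGraph V) : Set (Set V) :=
  {S | IsPendantBlock G S}

/-- A block is of type `P` (for `P = A` or `P = B`) if all its noncut vertices lie in `P`. -/
def TypeOnly (G : SimpleGraph V) (P : Set V) (S : Set V) : Prop :=
  ∀ v ∈ S, ¬IsCutVertex G v → v ∈ P

/-- A block is type AB if it has a noncut vertex in `A` and a noncut vertex in `B`. -/
def TypeAB (G : SimpleGraph V) (A B : Set V) (S : Set V) : Prop :=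
  (∃ v ∈ S, ¬IsCutVertex G v ∧ v ∈ A) ∧ (∃ v ∈ S, ¬IsCutVertex G v ∧ v ∈ B)

/-- A legal pair: two distinct pendant blocks, not both of type A and not both of type B. -/
def LegalPair (G : SimpleGraph V) (A B : Set V) (S T : Set V) : Prop :=
  IsPendantBlock G S ∧ IsPendantBlock G T ∧ S ≠ T ∧
  ¬(TypeOnly G A S ∧ TypeOnly G A T) ∧ ¬(TypeOnly G B S ∧ TypeOnly G B T)

/-- A legal edge: a vertex pair in `A × B` that is not an edge of `G`. -/
def LegalEdge (G : SimpleGraph V) (A B : Set V) (a b : V) : Prop :=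
  a ∈ A ∧ b ∈ B ∧ ¬G.Adj a b

/-- A binding edge for a legal pair: a legal edge joining two noncut vertices,
one from each block of the pair. -/
def BindingEdge (G : SimpleGraph V) (A B : Set V) (S T : Set V) (a b : V) : Prop :=
  LegalEdge G A B a b ∧
  ((a ∈ S ∧ ¬IsCutVertex G a ∧ b ∈ T ∧ ¬IsCutVertex G b) ∨
   (a ∈ T ∧ ¬IsCutVertex G a ∧ b ∈ S ∧ ¬IsCutVertex G b))

/-- A legal matching of a set `Λ'` of pendant blocks: a set of legal pairs between elements
of `Λ'` such that each element of `Λ'` belongs to at most one pair. -/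
def IsLegalMatching (G : SimpleGraph V) (A B : Set V) (Λ' : Set (Set V))
    (N : Set (Set V × Set V)) : Prop :=
  (∀ q ∈ N, q.1 ∈ Λ' ∧ q.2 ∈ Λ' ∧ LegalPair G A B q.1 q.2) ∧
  (∀ q ∈ N, ∀ q' ∈ N, q ≠ q' →
    ({q.1, q.2} ∩ {q'.1, q'.2} : Set (Set V)) = ∅)

/-- M(Λ'): the maximum cardinality of a legal matching of `Λ'`. -/
def maxMatching (G : SimpleGraph V) (A B : Set V) (Λ' : Set (Set V)) : ℕ :=
  sSup {k | ∃ N, IsLegalMatching G A B Λ' N ∧ N.ncard = k}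

/-- R(Λ') = |Λ'| − 2·M(Λ'). -/
def Rnum (G : SimpleGraph V) (A B : Set V) (Λ' : Set (Set V)) : ℕ :=
  Λ'.ncard - 2 * maxMatching G A B Λ'

/-- A graph is componentwise biconnected if every connected component is a block. -/
def ComponentwiseBiconnected (G : SimpleGraph V) : Prop :=
  ∀ c : G.ConnectedComponent, IsBlock G c.supp

/-- D(G,u): the number of connected components of X − {u}, where X is the
connected component of G containing u. -/
def Dnum (G : SimpleGraph V) (u : V) : ℕ :=
  Nat.card ((G.induce {v | G.Reachable u v ∧ v ≠ u}).ConnectedComponent)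

/-- C(G): the number of connected components of G that are not blocks. -/
def Cnum (G : SimpleGraph V) : ℕ :=
  Nat.card {c : G.ConnectedComponent // ¬IsBlock G c.supp}

/-- η(G) = max{ max_u D(G,u) + C(G) − 2, M(Λ(G)) + R(Λ(G)) }. -/
def eta (G : SimpleGraph V) (A B : Set V) : ℕ :=
  max ((⨆ u : V, Dnum G u) + Cnum G - 2)
      (maxMatching G A B (pendantBlocks G) + Rnum G A B (pendantBlocks G))

/-- A biconnector: a set of legal edges whose addition makes `G` componentwise biconnected. -/
def IsBiconnector (G : SimpleGraph V) (A B : Set V) (L : Set (Sym2 V)) : Prop :=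
  (∀ e ∈ L, ∃ a b : V, e = s(a, b) ∧ LegalEdge G A B a b) ∧
  ComponentwiseBiconnected (G ⊔ SimpleGraph.fromEdgeSet L)

/-- B(G): the minimum number of edges of a biconnector of `G`. -/
def Bnum (G : SimpleGraph V) (A B : Set V) : ℕ :=
  sInf {k | ∃ L, IsBiconnector G A B L ∧ L.ncard = k}

/-- A connected component is an isolated edge. -/
def IsIsolatedEdgeComp (G : SimpleGraph V) (c : G.ConnectedComponent) : Prop :=
  ∃ u v : V, G.Adj u v ∧ c.supp = {u, v}

/-- C1(G): the number of components that are neither isolated edges nor blocks. -/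
def C1num (G : SimpleGraph V) : ℕ :=
  Nat.card {c : G.ConnectedComponent // ¬IsIsolatedEdgeComp G c ∧ ¬IsBlock G c.supp}

/-- C2(G): the number of isolated-edge components. -/
def C2num (G : SimpleGraph V) : ℕ :=
  Nat.card {c : G.ConnectedComponent // IsIsolatedEdgeComp G c}

/-- C3(G): the number of components that are nonsingular blocks. -/
def C3num (G : SimpleGraph V) : ℕ :=
  Nat.card {c : G.ConnectedComponent // IsBlock G c.supp ∧ 1 < c.supp.ncard}

/-- A cut vertex `u` is critical if D(G,u) − 1 = M(Λ(G)) + R(Λ(G)). -/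
def Critical (G : SimpleGraph V) (A B : Set V) (u : V) : Prop :=
  IsCutVertex G u ∧
    Dnum G u - 1 = maxMatching G A B (pendantBlocks G) + Rnum G A B (pendantBlocks G)

/-- A cut vertex `u` is massive if D(G,u) − 1 > M(Λ(G)) + R(Λ(G)). -/
def Massive (G : SimpleGraph V) (A B : Set V) (u : V) : Prop :=
  IsCutVertex G u ∧
    maxMatching G A B (pendantBlocks G) + Rnum G A B (pendantBlocks G) < Dnum G u - 1

/-- Vertices of the block tree: blocks (b-vertices), cut vertices and cut edges (c-vertices). -/
inductive BTV (V : Type*) where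
  | blk : Set V → BTV V
  | cv : V → BTV V
  | ce : Sym2 V → BTV V

/-- Valid vertices of the block tree of `G`: nonsingular blocks and singular pendant blocks
(b-vertices), together with cut vertices and cut edges (c-vertices). -/
def IsBTVert (G : SimpleGraph V) : BTV V → Prop
  | .blk S => IsBlock G S ∧ (1 < S.ncard ∨ ∃ v, S = {v} ∧ (G.neighborSet v).ncard = 1)
  | .cv v => IsCutVertex G v
  | .ce e => IsCutEdge G e

/-- Adjacency of the block tree: a nonsingular block is joined to each cut vertex in it,
a cut vertex to each cut edge incident to it, and a cut edge to each singular (pendant)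
block containing one of its endpoints. -/
def btAdj (G : SimpleGraph V) : BTV V → BTV V → Prop
  | .blk _, .blk _ => False
  | .blk S, .cv c => 1 < S.ncard ∧ c ∈ S
  | .blk S, .ce e => ∃ v, S = {v} ∧ v ∈ e
  | .cv c, .blk S => 1 < S.ncard ∧ c ∈ S
  | .cv _, .cv _ => False
  | .cv c, .ce e => c ∈ e
  | .ce e, .blk S => ∃ v, S = {v} ∧ v ∈ e
  | .ce e, .cv c => c ∈ e
  | .ce _, .ce _ => False

/-- The vertex type of the block tree Ψ(G). -/
abbrev BTVert (G : SimpleGraph V) := {x : BTV V // IsBTVert G x}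

/-- The block tree Ψ(G). -/
def blockTree (G : SimpleGraph V) : SimpleGraph (BTVert G) where
  Adj x y := btAdj G x.1 y.1
  symm := by
    constructor
    rintro ⟨x, hx⟩ ⟨y, hy⟩ h
    cases x <;> cases y <;> simp_all [btAdj]
  loopless := by
    constructor
    rintro ⟨x, hx⟩ h
    cases x <;> simp_all [btAdj]

/-- Degree of a vertex of the block tree. -/
def btDeg (G : SimpleGraph V) (x : BTVert G) : ℕ :=
  Nat.card ((blockTree G).neighborSet x)

/-- A path is branchless if all its internal vertices have degree two. -/
def Branchless {W : Type*} (T : SimpleGraph W) {x y : W} (p : T.Walk x y) : Prop :=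
  p.IsPath ∧ ∀ z ∈ p.support, z ≠ x → z ≠ y → Nat.card (T.neighborSet z) = 2

/-- A leaf clings to a vertex `v` if there is a branchless path between it and `v`. -/
def Clings {W : Type*} (T : SimpleGraph W) (l v : W) : Prop :=
  ∃ p : T.Walk l v, Branchless T p

section

variable {G : SimpleGraph V} {a b c u v : V} {S T : Set V}

/-- A path cannot pass through a vertex with at most one neighbour. -/
lemma reachable_induce_ne_of_subsingleton_neighborSet (ha : (G.neighborSet a).Subsingleton)
    (hu : u ≠ a) (hv : v ≠ a) (h : G.Reachable u v) :
    (G.induce {x | x ≠ a}).Reachable ⟨u, hu⟩ ⟨v, hv⟩ := by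
  obtain ⟨p, hp⟩ := h.exists_isPath
  refine ⟨p.induce {x | x ≠ a} fun x hx (hxa : x = a) => ?_⟩
  exact hp.isTrail.not_mem_support_of_subsingleton_neighborSet hu.symm hv.symm ha (hxa ▸ hx)

lemma not_isCutVertex_of_subsingleton_neighborSet [Finite V]
    (ha : (G.neighborSet a).Subsingleton) : ¬IsCutVertex G a := by
  rw [IsCutVertex, not_lt]
  refine Nat.card_le_card_of_injective
    (ConnectedComponent.map (Embedding.induce {x | x ≠ a}).toHom) fun C C' => ?_
  induction C using ConnectedComponent.ind with | _ x =>
  induction C' using ConnectedComponent.ind with | _ y =>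
  intro hxy
  exact ConnectedComponent.sound
    (reachable_induce_ne_of_subsingleton_neighborSet ha x.2 y.2 (ConnectedComponent.exact hxy))

lemma reachable_induce_ne_of_not_isCutVertex [Finite V] (ha : ¬IsCutVertex G a)
    (hu : u ≠ a) (hv : v ≠ a) (h : G.Reachable u v) :
    (G.induce {x | x ≠ a}).Reachable ⟨u, hu⟩ ⟨v, hv⟩ := by
  rcases (G.neighborSet a).eq_empty_or_nonempty with hs | ⟨z, hz⟩
  · exact reachable_induce_ne_of_subsingleton_neighborSet (hs ▸ Set.subsingleton_empty) hu hv h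
  -- `a` has a neighbour, so every component of `G` meets `G - a`; as `G - a` has no more
  -- components than `G`, the induced map on components is a bijection.
  set f := ConnectedComponent.map (Embedding.induce (G := G) {x | x ≠ a}).toHom
  have hsurj : Function.Surjective f := by
    intro C
    induction C using ConnectedComponent.ind with | _ x =>
    by_cases hx : x = a
    · exact ⟨(G.induce {x | x ≠ a}).connectedComponentMk ⟨z, hz.ne'⟩,
        ConnectedComponent.sound (hx ▸ (G.adj_symm hz).reachable)⟩
    · exact ⟨(G.induce {x | x ≠ a}).connectedComponentMk ⟨x, hx⟩, rfl⟩
  have hbij : Function.Bijective f := (Nat.bijective_iff_surjective_and_card f).mpr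
    ⟨hsurj, le_antisymm (not_lt.mp ha) (Nat.card_le_card_of_surjective f hsurj)⟩
  exact ConnectedComponent.exact (hbij.injective (ConnectedComponent.sound h))

lemma Reachable.mem_of_forall_adj_mem {s : Set V} (hs : ∀ x ∈ s, ∀ y, G.Adj x y → y ∈ s)
    (hu : u ∈ s) (h : G.Reachable u v) : v ∈ s := by
  obtain ⟨p⟩ := h
  induction p with
  | nil => exact hu
  | cons hxy _ ih => exact ih (hs _ hu _ hxy)

lemma BiconnPair.symm (h : BiconnPair G u v) : BiconnPair G v u :=
  ⟨h.1.symm, fun e he => (h.2.1 e he).symm, fun w hv hu => (h.2.2 w hu hv).symm⟩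

lemma BiconnPair.trans_of_not_isCutVertex [Finite V] (hua : BiconnPair G u a)
    (hav : BiconnPair G a v) (ha : ¬IsCutVertex G a) : BiconnPair G u v := by
  refine ⟨hua.1.trans hav.1, fun e he => (hua.2.1 e he).trans (hav.2.1 e he), fun w hu hv => ?_⟩
  by_cases haw : a = w
  · subst haw
    exact reachable_induce_ne_of_not_isCutVertex ha hu hv (hua.1.trans hav.1)
  · exact (hua.2.2 w hu haw).trans (hav.2.2 w haw hv)

/-- As `a` is not a cut vertex, `c` reaches `b` in `G - a`, so the detour `a - c ⋯ b`
survives the removal of the edge `ab`. -/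
lemma biconnPair_of_adj_of_not_isCutVertex [Finite V] (ha : ¬IsCutVertex G a)
    (hab : G.Adj a b) (hac : G.Adj a c) (hcb : c ≠ b) : BiconnPair G a b := by
  refine ⟨hab.reachable, fun e he => ?_, fun w hu hv => (show (G.induce {x | x ≠ w}).Adj
    ⟨a, hu⟩ ⟨b, hv⟩ from hab).reachable⟩
  by_cases he : e = s(a, b)
  · subst he
    let avoid : G.induce {x | x ≠ a} →g G.deleteEdges {s(a, b)} :=
      ⟨Subtype.val, fun {x y} hxy => deleteEdges_adj.mpr
        ⟨hxy, fun hx => (Sym2.mem_iff.mp (hx ▸ Sym2.mem_mk_left a b)).elim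
          (fun h => x.2 h.symm) (fun h => y.2 h.symm)⟩⟩
    have hcb_reach := reachable_induce_ne_of_not_isCutVertex ha hac.ne' hab.ne'
      (hac.symm.reachable.trans hab.reachable)
    exact (deleteEdges_adj.mpr ⟨hac, fun h => hcb (Sym2.congr_right.mp h)⟩).reachable.trans
      (hcb_reach.map avoid)
  · exact (deleteEdges_adj.mpr ⟨hab, fun h => he (Set.mem_singleton_iff.mp h).symm⟩).reachable

lemma IsBlock.subset_of_forall_biconnPair [Finite V] (hS : IsBlock G S) (haS : a ∈ S)
    (ha : ¬IsCutVertex G a) (hT : ∀ v ∈ T, BiconnPair G v a) : T ⊆ S := by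
  have hST : ∀ v ∈ S ∪ T, BiconnPair G v a := fun v hv =>
    hv.elim (hS.2.1 v · a haS) (hT v)
  have hbic : BiconnSet G (S ∪ T) := fun u hu v hv =>
    (hST u hu).trans_of_not_isCutVertex (hST v hv).symm ha
  exact hS.2.2 _ Set.subset_union_left hbic ▸ Set.subset_union_right

lemma IsBlock.eq_of_not_isCutVertex [Finite V] (hS : IsBlock G S) (hT : IsBlock G T)
    (haS : a ∈ S) (haT : a ∈ T) (ha : ¬IsCutVertex G a) : S = T :=
  (hT.subset_of_forall_biconnPair haT ha fun v hv => hS.2.1 v hv a haS).antisymm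
    (hS.subset_of_forall_biconnPair haS ha fun v hv => hT.2.1 v hv a haT)

lemma IsPendantBlock.exists_not_isCutVertex [Finite V] (h : IsPendantBlock G S) :
    ∃ v ∈ S, ¬IsCutVertex G v := by
  rcases h.2 with ⟨v, rfl, hdeg⟩ | ⟨hcard, w, -, hw⟩
  · obtain ⟨u, hu⟩ := Set.ncard_eq_one.mp hdeg
    exact ⟨v, rfl, not_isCutVertex_of_subsingleton_neighborSet (hu ▸ Set.subsingleton_singleton)⟩
  · obtain ⟨x, y, hx, hy, hxy⟩ := (Set.one_lt_ncard_iff S.toFinite).mp hcard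
    by_cases hxw : x = w
    · exact ⟨y, hy, fun hcut => hxy (hxw.trans (hw y ⟨hy, hcut⟩).symm)⟩
    · exact ⟨x, hx, fun hcut => hxw (hw x ⟨hx, hcut⟩)⟩

/-- A second neighbour of `a` would make `a` and `b` biconnected, putting `b` in the block
of `a`. -/
lemma isolated_edge_of_adj_of_not_isCutVertex [Finite V] (hab : G.Adj a b)
    (ha : ¬IsCutVertex G a) (hb : ¬IsCutVertex G b) (hS : IsBlock G S) (hT : IsBlock G T)
    (haS : a ∈ S) (hbT : b ∈ T) (hST : S ≠ T) :
    S = {a} ∧ T = {b} ∧ {w | G.Reachable a w} = ({a, b} : Set V) := by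
  have hbS : b ∉ S := fun hbS => hST (hS.eq_of_not_isCutVertex hT hbS hbT hb)
  have haT : a ∉ T := fun haT => hST (hS.eq_of_not_isCutVertex hT haS haT ha)
  have hnbr_a : ∀ z, G.Adj a z → z = b := fun z haz => by_contra fun hzb =>
    hbS (Set.singleton_subset_iff.mp (hS.subset_of_forall_biconnPair haS ha
      fun v (hv : v = b) => hv ▸ (biconnPair_of_adj_of_not_isCutVertex ha hab haz hzb).symm))
  have hnbr_b : ∀ z, G.Adj b z → z = a := fun z hbz => by_contra fun hza =>
    haT (Set.singleton_subset_iff.mp (hT.subset_of_forall_biconnPair hbT hb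
      fun v (hv : v = a) => hv ▸ (biconnPair_of_adj_of_not_isCutVertex hb hab.symm hbz hza).symm))
  have hcomp : {w | G.Reachable a w} = ({a, b} : Set V) := by
    refine Set.Subset.antisymm (fun w hw => Reachable.mem_of_forall_adj_mem ?_ (by simp) hw) ?_
    · rintro x (rfl | rfl) y hxy
      exacts [.inr (hnbr_a y hxy), .inl (hnbr_b y hxy)]
    · rintro w (rfl | rfl)
      exacts [Reachable.refl _, hab.reachable]
  refine ⟨Set.eq_singleton_iff_unique_mem.mpr ⟨haS, fun y hy => ?_⟩,
    Set.eq_singleton_iff_unique_mem.mpr ⟨hbT, fun y hy => ?_⟩, hcomp⟩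
  · have : y ∈ ({a, b} : Set V) := hcomp ▸ (hS.2.1 a haS y hy).1
    exact this.resolve_right fun h => hbS (h ▸ hy)
  · have : y ∈ ({a, b} : Set V) := hcomp ▸ hab.reachable.trans (hT.2.1 b hbT y hy).1
    exact this.resolve_left fun h => haT (h ▸ hy)

lemma exists_not_isCutVertex_mem_of_not_typeOnly {P Q : Set V} (hcov : P ∪ Q = Set.univ)
    (h : ¬TypeOnly G P S) : ∃ v ∈ S, ¬IsCutVertex G v ∧ v ∈ Q := by
  simp only [TypeOnly, not_forall] at h
  obtain ⟨v, hvS, hv, hvP⟩ := h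
  exact ⟨v, hvS, hv, (hcov.symm ▸ Set.mem_univ v : v ∈ P ∪ Q).resolve_left hvP⟩

lemma IsPendantBlock.exists_not_isCutVertex_mem_or [Finite V] {A B : Set V}
    (hcov : A ∪ B = Set.univ) (h : IsPendantBlock G S) :
    (∃ v ∈ S, ¬IsCutVertex G v ∧ v ∈ A) ∨ (∃ v ∈ S, ¬IsCutVertex G v ∧ v ∈ B) := by
  obtain ⟨v, hvS, hv⟩ := h.exists_not_isCutVertex
  exact (hcov.symm ▸ Set.mem_univ v : v ∈ A ∪ B).imp (⟨v, hvS, hv, ·⟩) (⟨v, hvS, hv, ·⟩)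

lemma LegalPair.exists_not_isCutVertex_mem [Finite V] {A B : Set V} (hcov : A ∪ B = Set.univ)
    (h : LegalPair G A B S T) :
    ∃ a ∈ A, ∃ b ∈ B, ¬IsCutVertex G a ∧ ¬IsCutVertex G b ∧
      ((a ∈ S ∧ b ∈ T) ∨ (a ∈ T ∧ b ∈ S)) := by
  obtain ⟨hS, hT, -, hA, hB⟩ := h
  have hcov' : B ∪ A = Set.univ := (Set.union_comm B A).trans hcov
  have hB_ST := (not_and_or.mp hA).imp (exists_not_isCutVertex_mem_of_not_typeOnly hcov)
    (exists_not_isCutVertex_mem_of_not_typeOnly hcov)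
  have hA_ST := (not_and_or.mp hB).imp (exists_not_isCutVertex_mem_of_not_typeOnly hcov')
    (exists_not_isCutVertex_mem_of_not_typeOnly hcov')
  have hS_AB := hS.exists_not_isCutVertex_mem_or hcov
  have hT_AB := hT.exists_not_isCutVertex_mem_or hcov
  have : ((∃ a ∈ S, ¬IsCutVertex G a ∧ a ∈ A) ∧ (∃ b ∈ T, ¬IsCutVertex G b ∧ b ∈ B)) ∨
      ((∃ a ∈ T, ¬IsCutVertex G a ∧ a ∈ A) ∧ (∃ b ∈ S, ¬IsCutVertex G b ∧ b ∈ B)) := by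
    generalize (∃ a ∈ S, ¬IsCutVertex G a ∧ a ∈ A) = pAS at *
    generalize (∃ a ∈ T, ¬IsCutVertex G a ∧ a ∈ A) = pAT at *
    generalize (∃ b ∈ S, ¬IsCutVertex G b ∧ b ∈ B) = pBS at *
    generalize (∃ b ∈ T, ¬IsCutVertex G b ∧ b ∈ B) = pBT at *
    tauto
  rcases this with ⟨⟨a, haS, ha, haA⟩, ⟨b, hbT, hb, hbB⟩⟩ | ⟨⟨a, haT, ha, haA⟩, ⟨b, hbS, hb, hbB⟩⟩
  exacts [⟨a, haA, b, hbB, ha, hb, .inl ⟨haS, hbT⟩⟩, ⟨a, haA, b, hbB, ha, hb, .inr ⟨haT, hbS⟩⟩]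

end

theorem stmt_1_general [Fintype V] (G : SimpleGraph V) (A B : Set V)
    (hcov : A ∪ B = Set.univ)
    (Y1 Y2 : Set V) (hpair : LegalPair G A B Y1 Y2)
    (hnotiso : ¬∃ u v : V, G.Adj u v ∧ Y1 = {u} ∧ Y2 = {v} ∧
      {w | G.Reachable u w} = ({u, v} : Set V)) :
    ∃ a b : V, BindingEdge G A B Y1 Y2 a b := by
  obtain ⟨a, haA, b, hbB, ha, hb, hmem⟩ := hpair.exists_not_isCutVertex_mem hcov
  obtain ⟨hY1, hY2, hne, -⟩ := hpair
  refine ⟨a, b, ⟨haA, hbB, fun hab => hnotiso ?_⟩, ?_⟩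
  · rcases hmem with ⟨haY, hbY⟩ | ⟨haY, hbY⟩
    · exact ⟨a, b, hab,
        isolated_edge_of_adj_of_not_isCutVertex hab ha hb hY1.1 hY2.1 haY hbY hne⟩
    · exact ⟨b, a, hab.symm,
        isolated_edge_of_adj_of_not_isCutVertex hab.symm hb ha hY1.1 hY2.1 hbY haY hne⟩
  · rcases hmem with ⟨haY, hbY⟩ | ⟨haY, hbY⟩
    exacts [.inl ⟨haY, ha, hbY, hb⟩, .inr ⟨haY, ha, hbY, hb⟩]

theorem stmt_1 [Fintype V] (G : SimpleGraph V) (A B : Set V)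
    (hdisj : Disjoint A B) (hcov : A ∪ B = Set.univ)
    (hbip : ∀ u v : V, G.Adj u v → (u ∈ A ∧ v ∈ B) ∨ (u ∈ B ∧ v ∈ A))
    (Y1 Y2 : Set V) (hpair : LegalPair G A B Y1 Y2)
    (hnotiso : ¬∃ u v : V, G.Adj u v ∧ Y1 = {u} ∧ Y2 = {v} ∧
      {w | G.Reachable u w} = ({u, v} : Set V)) :
    ∃ a b : V, BindingEdge G A B Y1 Y2 a b :=
  stmt_1_general G A B hcov Y1 Y2 hpair hnotiso

end
end AugBic
end

section
/- Let G=(A,B,E) be a bipartite graph. Then G is componentwise biconnected if and only if η(G) = 0, where η(G) = max{ max_{u∈G} D(G,u) + C(G) − 2, M(Λ(G)) + R(Λ(G)) }. -/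
open SimpleGraph

namespace AugBic

noncomputable section

variable {V : Type*}

/-!
If every component is a block there are no cut vertices, hence no pendant blocks, and removing a
vertex never splits its component, so both terms of η vanish. Conversely, two vertices of a
component that are not biconnected are separated either by a vertex `w`, which then splits its
component into at least two pieces (`D(G,w) ≥ 2`), or by a bridge `ab`; in the latter case either
`a` has a further neighbour, and again `D(G,a) ≥ 2`, or `a` has degree one and `{a}` is a pendant
block. Together with the non-block component itself, either outcome makes η positive.
-/

section

variable {G : SimpleGraph V}

lemma exists_walk_of_reachable_induce {s : Set V} {x y : s} (h : (G.induce s).Reachable x y) :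
    ∃ p : G.Walk x y, ∀ z ∈ p.support, z ∈ s := by
  obtain ⟨p⟩ := h
  refine ⟨p.map (Embedding.induce s).toHom, fun z hz => ?_⟩
  obtain ⟨z, -, rfl⟩ := List.mem_map.mp (Walk.support_map _ p ▸ hz)
  exact z.2

lemma reachable_deleteEdges_of_not_isBridge {a b x y : V} (hab : ¬G.IsBridge s(a, b))
    (h : G.Reachable x y) : (G.deleteEdges {s(a, b)}).Reachable x y := by
  rw [isBridge_iff, not_not] at hab
  obtain ⟨p⟩ := h
  induction p with
  | nil => rfl
  | @cons c d _ hcd _ ih =>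
    refine Reachable.trans ?_ ih
    by_cases hcd' : s(c, d) = s(a, b)
    · rcases Sym2.eq_iff.mp hcd' with ⟨rfl, rfl⟩ | ⟨rfl, rfl⟩
      exacts [hab, hab.symm]
    · exact (deleteEdges_adj.mpr ⟨hcd, hcd'⟩).reachable

lemma isBlock_supp_of_biconnSet {c : G.ConnectedComponent} (hc : BiconnSet G c.supp) :
    IsBlock G c.supp := by
  refine ⟨c.nonempty_supp, hc, fun T hcT hT => ?_⟩
  obtain ⟨x, rfl⟩ := c.exists_rep
  refine hcT.antisymm' fun t ht => ?_
  exact ConnectedComponent.sound (hT x (hcT rfl) t ht).1.symm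

lemma cnum_eq_zero_iff [Finite V] : Cnum G = 0 ↔ ComponentwiseBiconnected G := by
  rw [Cnum, Nat.card_eq_zero, or_iff_left (not_infinite_iff_finite.mpr inferInstance)]
  exact ⟨fun h c => by_contra fun hc => h.false ⟨c, hc⟩, fun h => ⟨fun c => c.2 (h c.1)⟩⟩

lemma maxMatching_empty (A B : Set V) : maxMatching G A B ∅ = 0 := by
  have hempty : IsLegalMatching G A B ∅ ∅ := ⟨fun _ => False.elim, fun _ => False.elim⟩
  refine Nat.eq_zero_of_le_zero (csSup_le ⟨0, ∅, hempty, Set.ncard_empty _⟩ ?_)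
  rintro k ⟨N, hN, rfl⟩
  rw [Set.eq_empty_of_forall_notMem fun q hq => (hN.1 q hq).1, Set.ncard_empty]

lemma eta_eq_zero_iff [Finite V] (A B : Set V) :
    eta G A B = 0 ↔ (⨆ u, Dnum G u) + Cnum G ≤ 2 ∧ pendantBlocks G = ∅ := by
  rw [eta, Rnum, Nat.max_eq_zero_iff]
  refine ⟨fun ⟨hD, hΛ⟩ => ⟨by omega, ?_⟩, fun ⟨hD, hΛ⟩ => ⟨by omega, ?_⟩⟩
  · exact (Set.ncard_eq_zero (Set.toFinite _)).mp (by omega)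
  · simp [hΛ, maxMatching_empty]

lemma dnum_le_one (hG : ComponentwiseBiconnected G) (u : V) : Dnum G u ≤ 1 := by
  classical
  set S := {v | G.Reachable u v ∧ v ≠ u}
  suffices Subsingleton (G.induce S).ConnectedComponent from
    Finite.card_le_one_iff_subsingleton.mpr this
  refine ⟨ConnectedComponent.ind₂ fun ⟨a, hua, hau⟩ ⟨b, hub, hbu⟩ => ?_⟩
  have hc := (hG (G.connectedComponentMk u)).2.1 a (ConnectedComponent.sound hua.symm)
    b (ConnectedComponent.sound hub.symm)
  obtain ⟨p, hp⟩ := exists_walk_of_reachable_induce (hc.2.2 u hau hbu)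
  -- a walk from `a` avoiding `u` stays in the component of `u`, i.e. in `S`
  exact ConnectedComponent.sound ⟨p.induce S fun z hz => ⟨hua.trans ⟨p.takeUntil z hz⟩, hp z hz⟩⟩

lemma not_isCutVertex [Finite V] (hG : ComponentwiseBiconnected G) (v : V) :
    ¬IsCutVertex G v := by
  have hinj : Function.Injective
      (ConnectedComponent.map (Embedding.induce (G := G) {x | x ≠ v}).toHom) := by
    refine ConnectedComponent.ind₂ fun ⟨a, ha⟩ ⟨b, hb⟩ h => ?_
    have hab : G.Reachable a b := ConnectedComponent.exact h
    exact ConnectedComponent.sound (((hG (G.connectedComponentMk a)).2.1 a rfl b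
      (ConnectedComponent.sound hab.symm)).2.2 v ha hb)
  exact (Nat.card_le_card_of_injective _ hinj).not_gt

lemma pendantBlocks_eq_empty [Finite V] (hG : ComponentwiseBiconnected G) :
    pendantBlocks G = ∅ := by
  refine Set.eq_empty_of_forall_notMem fun S ⟨hS, hpend⟩ => ?_
  rcases hpend with ⟨v, rfl, hdeg⟩ | ⟨-, w, ⟨-, hw⟩, -⟩
  · obtain ⟨w, hw⟩ := Set.ncard_eq_one.mp hdeg
    have hvw : G.Adj v w := (Set.ext_iff.mp hw w).mpr rfl
    have hsupp : (G.connectedComponentMk v).supp = {v} :=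
      hS.2.2 _ (Set.singleton_subset_iff.mpr rfl) (hG _).2.1
    have hwv : w ∈ ({v} : Set V) := hsupp ▸ ConnectedComponent.sound hvw.reachable.symm
    exact hvw.ne (Set.mem_singleton_iff.mp hwv).symm
  · exact not_isCutVertex hG w hw

lemma isPendantBlock_singleton {a b : V} (hab : G.neighborSet a = {b}) :
    IsPendantBlock G {a} := by
  have hisolated : ∀ x, (G.deleteEdges {s(a, b)}).Reachable a x → x = a := by
    rintro x ⟨_ | ⟨hay, -⟩⟩
    · rfl
    obtain ⟨hay, hne⟩ := deleteEdges_adj.mp hay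
    rw [← mem_neighborSet, hab, Set.mem_singleton_iff] at hay
    exact (hne (by rw [hay]; rfl)).elim
  have hab' : G.Adj a b := (Set.ext_iff.mp hab b).mpr rfl
  refine ⟨⟨Set.singleton_nonempty a, ?_, fun T haT hT => ?_⟩, Or.inl ⟨a, rfl, by simp [hab]⟩⟩
  · rintro u rfl v rfl
    exact ⟨Reachable.refl _, fun _ _ => Reachable.refl _, fun _ _ _ => Reachable.refl _⟩
  · refine (Set.eq_singleton_iff_unique_mem.mpr ⟨haT rfl, fun t ht => ?_⟩)
    exact hisolated t ((hT t ht a (haT rfl)).2.1 _ hab').symm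

lemma two_le_dnum_of_not_reachable_induce [Finite V] {u v w : V} (huv : G.Reachable u v)
    (hu : u ≠ w) (hv : v ≠ w) (hsep : ¬(G.induce {z | z ≠ w}).Reachable ⟨u, hu⟩ ⟨v, hv⟩) :
    2 ≤ Dnum G w := by
  classical
  have hwu : G.Reachable w u := by
    by_contra hwu
    obtain ⟨p⟩ := huv
    exact hsep ⟨p.induce _ fun z hz (hzw : z = w) => hwu (hzw ▸ ⟨(p.takeUntil z hz).reverse⟩)⟩
  set S := {z | G.Reachable w z ∧ z ≠ w}
  have hne : (G.induce S).connectedComponentMk ⟨u, hwu, hu⟩ ≠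
      (G.induce S).connectedComponentMk ⟨v, hwu.trans huv, hv⟩ := fun h =>
    hsep ((ConnectedComponent.exact h).map (G.induceHomOfLE fun _ hz => hz.2).toHom)
  exact Finite.one_lt_card_iff_nontrivial.mpr ⟨_, _, hne⟩

lemma two_le_dnum_of_isBridge [Finite V] {a b y : V} (hab : G.Adj a b)
    (hbr : G.IsBridge s(a, b)) (hay : G.Adj a y) (hyb : y ≠ b) : 2 ≤ Dnum G a := by
  refine two_le_dnum_of_not_reachable_induce (hay.reachable.symm.trans hab.reachable)
    hay.ne.symm hab.ne.symm fun h => ?_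
  obtain ⟨p, hp⟩ := exists_walk_of_reachable_induce h
  -- `a – y ⇝ b` avoiding `a` would be a walk from `a` to `b` not using the bridge
  refine absurd (isBridge_iff_forall_walk_mem_edges.mp hbr (Walk.cons hay p)) ?_
  rw [Walk.edges_cons, List.mem_cons, not_or]
  refine ⟨fun h => hyb (Sym2.congr_right.mp h).symm, fun h => hp a ?_ rfl⟩
  exact p.fst_mem_support_of_mem_edges h

lemma exists_two_le_dnum_of_not_biconnPair [Finite V] (hΛ : pendantBlocks G = ∅) {u v : V}
    (huv : G.Reachable u v) (h : ¬BiconnPair G u v) : ∃ w, 2 ≤ Dnum G w := by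
  simp only [BiconnPair, huv, true_and, not_and_or, not_forall] at h
  rcases h with ⟨e, he, hsep⟩ | ⟨w, hu, hv, hsep⟩
  · induction e using Sym2.ind with | _ a b => ?_
    have hbr : G.IsBridge s(a, b) :=
      by_contra fun hbr => hsep (reachable_deleteEdges_of_not_isBridge hbr huv)
    by_cases hy : ∃ y, G.Adj a y ∧ y ≠ b
    · obtain ⟨y, hay, hyb⟩ := hy
      exact ⟨a, two_le_dnum_of_isBridge he hbr hay hyb⟩
    · push Not at hy
      have hdeg : G.neighborSet a = {b} := Set.eq_singleton_iff_unique_mem.mpr ⟨he, hy⟩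
      exact (Set.eq_empty_iff_forall_notMem.mp hΛ _ (isPendantBlock_singleton hdeg)).elim
  · exact ⟨w, two_le_dnum_of_not_reachable_induce huv hu hv hsep⟩

lemma exists_two_le_dnum [Finite V] (hΛ : pendantBlocks G = ∅)
    (hG : ¬ComponentwiseBiconnected G) : ∃ w, 2 ≤ Dnum G w := by
  obtain ⟨c, hc⟩ := not_forall.mp hG
  obtain ⟨u, hu, v, hv, huv⟩ : ∃ u ∈ c.supp, ∃ v ∈ c.supp, ¬BiconnPair G u v := by
    simpa [BiconnSet] using mt isBlock_supp_of_biconnSet hc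
  exact exists_two_le_dnum_of_not_biconnPair hΛ (ConnectedComponent.exact (hu.trans hv.symm)) huv

end

theorem stmt_4_general [Fintype V] (G : SimpleGraph V) (A B : Set V) :
    ComponentwiseBiconnected G ↔ eta G A B = 0 := by
  rw [eta_eq_zero_iff]
  constructor
  · intro hG
    have hD : (⨆ u, Dnum G u) ≤ 1 := ciSup_le' (dnum_le_one hG)
    exact ⟨by rw [cnum_eq_zero_iff.mpr hG]; omega, pendantBlocks_eq_empty hG⟩
  · rintro ⟨hD, hΛ⟩
    by_contra hG
    obtain ⟨w, hw⟩ := exists_two_le_dnum hΛ hG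
    have hC : Cnum G ≠ 0 := mt cnum_eq_zero_iff.mp hG
    have hDw : Dnum G w ≤ ⨆ u, Dnum G u := le_ciSup (Finite.bddAbove_range _) w
    omega

theorem stmt_4 [Fintype V] (G : SimpleGraph V) (A B : Set V)
    (hdisj : Disjoint A B) (hcov : A ∪ B = Set.univ)
    (hbip : ∀ u v : V, G.Adj u v → (u ∈ A ∧ v ∈ B) ∨ (u ∈ B ∧ v ∈ A)) :
    ComponentwiseBiconnected G ↔ eta G A B = 0 :=
  stmt_4_general G A B

end
end AugBic
end

section
/- Let G=(A,B,E) be a bipartite graph with |A| ≥ 2 and |B| ≥ 2 such that C1(G) = 0, C2(G) = 1, and C3(G) > 0, i.e., every connected component of G is an isolated edge or a block, exactly one component is an isolated edge, and at least one component is a nonsingular block. Then B(G) = 2. -/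
open SimpleGraph

namespace AugBic

noncomputable section

variable {V : Type*}

/-!
An isolated edge `uv` needs two new edges: `uv` must lie on a cycle of the augmented graph, so
both `u` and `v` acquire a new neighbour, and one new edge cannot serve both ends because `uv` is
already an edge. Conversely, let `a ∈ A` and `b ∈ B` lie in a nonsingular block component `D`
(which has an edge). Adding `ub` and `av` attaches the path `b u v a` to `D` as an ear, so
`D ∪ {u, v}` becomes a block, and every other component is an untouched block.
-/

section Biconnectivity

variable {G H : SimpleGraph V} {x y : V}

lemma BiconnPair.reachable_deleteEdges (h : BiconnPair G x y) (e : Sym2 V) :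
    (G.deleteEdges {e}).Reachable x y := by
  by_cases he : e ∈ G.edgeSet
  · exact h.2.1 e he
  · rw [deleteEdges_eq_self.2 (Set.disjoint_singleton_right.2 he)]
    exact h.1

lemma BiconnPair.mono (hGH : G ≤ H) (h : BiconnPair G x y) : BiconnPair H x y :=
  ⟨h.1.mono hGH, fun e _ => (h.reachable_deleteEdges e).mono (deleteEdges_mono hGH),
    fun w hx hy => (h.2.2 w hx hy).mono fun _ _ hpq => hGH hpq⟩

lemma BiconnPair.exists_adj_ne (h : BiconnPair G x y) (hxy : G.Adj x y) :
    ∃ z, z ≠ y ∧ G.Adj x z := by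
  obtain ⟨p⟩ := h.2.1 s(x, y) hxy
  have hadj := p.adj_snd (Walk.not_nil_of_ne hxy.ne)
  rw [deleteEdges_adj] at hadj
  exact ⟨p.snd, fun hz => hadj.2 (by simp [hz]), hadj.1⟩

lemma componentwiseBiconnected_iff :
    ComponentwiseBiconnected G ↔ ∀ x y, G.Reachable x y → BiconnPair G x y := by
  refine ⟨fun h x y hxy => (h _).2.1 x rfl y (ConnectedComponent.sound hxy).symm, fun h c => ?_⟩
  obtain ⟨x, hx⟩ := c.nonempty_supp
  refine ⟨⟨x, hx⟩, fun y hy z hz => h y z (c.reachable_of_mem_supp hy hz), fun T hcT hT => ?_⟩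
  refine Set.Subset.antisymm (fun y hy => ?_) hcT
  exact (ConnectedComponent.sound (hT x (hcT hx) y hy).1).symm.trans hx

end Biconnectivity

section Ear

variable {G H : SimpleGraph V} {S : Set V} {a b u v : V}

lemma reachable_of_ear (hGH : G ≤ H) (hS : BiconnSet G S) (ha : a ∈ S) (hb : b ∈ S)
    (hub : H.Adj u b) (hav : H.Adj a v) : ∀ x ∈ ({u, v} ∪ S : Set V), H.Reachable x a := by
  rintro x ((rfl | rfl) | hx)
  · exact hub.reachable.trans ((hS b hb a ha).1.mono hGH)
  · exact hav.symm.reachable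
  · exact (hS x hx a ha).1.mono hGH

lemma reachable_deleteEdges_of_ear (hGH : G ≤ H) (hS : BiconnSet G S) (ha : a ∈ S)
    (hb : b ∈ S) (hu : u ∉ S) (hv : v ∉ S) (huv : H.Adj u v) (hub : H.Adj u b) (hav : H.Adj a v)
    (e : Sym2 V) : ∀ x ∈ ({u, v} ∪ S : Set V), (H.deleteEdges {e}).Reachable x a := by
  have hS' : ∀ x ∈ S, ∀ y ∈ S, (H.deleteEdges {e}).Reachable x y := fun x hx y hy =>
    ((hS x hx y hy).reachable_deleteEdges e).mono (deleteEdges_mono hGH)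
  have hua : u ≠ a := fun h => hu (h ▸ ha)
  have hvb : v ≠ b := fun h => hv (h ▸ hb)
  have adj {p q : V} (hpq : H.Adj p q) (he : s(p, q) ≠ e) : (H.deleteEdges {e}).Reachable p q :=
    Adj.reachable ((deleteEdges_adj ..).2 ⟨hpq, he⟩)
  -- Deleting `e` removes at most one of the edges `ub`, `uv`, `va` of the cycle `u b ⋯ a v u`.
  rintro x ((rfl | rfl) | hx)
  · by_cases he : s(x, b) = e
    · subst he
      exact (adj huv (by simp [hvb, huv.ne.symm])).trans
        (adj hav.symm (by simp [huv.ne.symm, hvb]))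
    · exact (adj hub he).trans (hS' b hb a ha)
  · by_cases he : s(a, x) = e
    · subst he
      exact (adj huv.symm (by simp [hua, huv.ne])).trans
        ((adj hub (by simp [hua, huv.ne])).trans (hS' b hb a ha))
    · exact adj hav.symm (by rwa [Sym2.eq_swap])
  · exact hS' x hx a ha

lemma reachable_induce_of_ear (hGH : G ≤ H) (hS : BiconnSet G S) (ha : a ∈ S) (hb : b ∈ S)
    (hab : a ≠ b) (hu : u ∉ S) (hv : v ∉ S) (huv : H.Adj u v) (hub : H.Adj u b)
    (hav : H.Adj a v) (w : V) :
    ∀ x ∈ ({u, v} ∪ S : Set V), ∀ y ∈ ({u, v} ∪ S : Set V), ∀ (hx : x ≠ w) (hy : y ≠ w),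
      (H.induce {z | z ≠ w}).Reachable ⟨x, hx⟩ ⟨y, hy⟩ := by
  have hS' : ∀ x ∈ S, ∀ y ∈ S, ∀ (hx : x ≠ w) (hy : y ≠ w),
      (H.induce {z | z ≠ w}).Reachable ⟨x, hx⟩ ⟨y, hy⟩ := fun x hx y hy hxw hyw =>
    ((hS x hx y hy).2.2 w hxw hyw).mono fun _ _ hpq => hGH hpq
  have adj {p q : V} (hp : p ≠ w) (hq : q ≠ w) (hpq : H.Adj p q) :
      (H.induce {z | z ≠ w}).Reachable ⟨p, hp⟩ ⟨q, hq⟩ :=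
    Adj.reachable hpq
  suffices ∃ c, ∃ hc : c ≠ w, ∀ x ∈ ({u, v} ∪ S : Set V), ∀ hx : x ≠ w,
      (H.induce {z | z ≠ w}).Reachable ⟨x, hx⟩ ⟨c, hc⟩ by
    obtain ⟨c, _, hc⟩ := this
    exact fun x hx y hy hxw hyw => (hc x hx hxw).trans (hc y hy hyw).symm
  have hua : u ≠ a := fun h => hu (h ▸ ha)
  have hvb : v ≠ b := fun h => hv (h ▸ hb)
  by_cases hwa : w = a
  · subst hwa
    refine ⟨b, hab.symm, ?_⟩
    rintro x ((rfl | rfl) | hx) hxw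
    · exact adj hxw _ hub
    · exact (adj hxw hua huv.symm).trans (adj hua _ hub)
    · exact hS' x hx b hb hxw _
  · refine ⟨a, Ne.symm hwa, ?_⟩
    rintro x ((rfl | rfl) | hx) hxw
    · by_cases hwb : w = b
      · subst hwb
        exact (adj hxw hvb huv).trans (adj hvb _ hav.symm)
      · exact (adj hxw (Ne.symm hwb) hub).trans (hS' b hb a ha _ _)
    · exact adj hxw _ hav.symm
    · exact hS' x hx a ha hxw _

theorem BiconnSet.union_ear (hGH : G ≤ H) (hS : BiconnSet G S) (ha : a ∈ S) (hb : b ∈ S)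
    (hab : a ≠ b) (hu : u ∉ S) (hv : v ∉ S) (huv : H.Adj u v) (hub : H.Adj u b)
    (hav : H.Adj a v) : BiconnSet H ({u, v} ∪ S) := fun x hx y hy =>
  ⟨(reachable_of_ear hGH hS ha hb hub hav x hx).trans
      (reachable_of_ear hGH hS ha hb hub hav y hy).symm,
    fun e _ => (reachable_deleteEdges_of_ear hGH hS ha hb hu hv huv hub hav e x hx).trans
      (reachable_deleteEdges_of_ear hGH hS ha hb hu hv huv hub hav e y hy).symm,
    fun w => reachable_induce_of_ear hGH hS ha hb hab hu hv huv hub hav w x hx y hy⟩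

end Ear

section IsolatedEdge

variable {G : SimpleGraph V}

lemma eq_of_adj_of_supp_eq_pair {c : G.ConnectedComponent} {u v z : V}
    (hc : c.supp = {u, v}) (huz : G.Adj u z) : z = v := by
  have hz : z ∈ c.supp := c.mem_supp_of_adj_mem_supp (hc ▸ Set.mem_insert u {v}) huz
  rw [hc] at hz
  exact hz.resolve_left huz.ne.symm

lemma IsIsolatedEdgeComp.not_isBlock {c : G.ConnectedComponent} (hc : IsIsolatedEdgeComp G c) :
    ¬IsBlock G c.supp := by
  obtain ⟨u, v, huv, hc⟩ := hc
  intro hblock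
  have hu : u ∈ c.supp := hc ▸ Set.mem_insert u {v}
  have hv : v ∈ c.supp := hc ▸ Set.mem_insert_of_mem u rfl
  obtain ⟨z, hzv, huz⟩ := (hblock.2.1 u hu v hv).exists_adj_ne huv
  exact hzv (eq_of_adj_of_supp_eq_pair hc huz)

theorem IsIsolatedEdgeComp.two_le_ncard [Finite V] {c : G.ConnectedComponent}
    (hc : IsIsolatedEdgeComp G c) {L : Set (Sym2 V)}
    (hL : ComponentwiseBiconnected (G ⊔ fromEdgeSet L)) : 2 ≤ L.ncard := by
  obtain ⟨u, v, huv, hc⟩ := hc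
  have hGH : G ≤ G ⊔ fromEdgeSet L := le_sup_left
  -- The edge `pq` must survive its own deletion, so `p` needs a neighbour other than `q`.
  have new_edge {p q : V} (hpq : G.Adj p q) (hp : ∀ z, G.Adj p z → z = q) :
      ∃ z, z ≠ q ∧ s(p, z) ∈ L := by
    obtain ⟨z, hzq, hz⟩ := (componentwiseBiconnected_iff.1 hL p q
      (hpq.reachable.mono hGH)).exists_adj_ne (hGH hpq)
    rw [sup_adj, fromEdgeSet_adj] at hz
    exact ⟨z, hzq, (hz.resolve_left fun h => hzq (hp z h)).1⟩
  obtain ⟨z, hzv, hz⟩ := new_edge huv fun _ => eq_of_adj_of_supp_eq_pair hc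
  obtain ⟨z', -, hz'⟩ :=
    new_edge huv.symm fun _ => eq_of_adj_of_supp_eq_pair (hc.trans (Set.pair_comm u v))
  have hne : s(u, z) ≠ s(v, z') := by simp [huv.ne, hzv]
  exact (Set.one_lt_ncard_iff L.toFinite).2 ⟨_, _, hz, hz', hne⟩

end IsolatedEdge

section Components

variable {G : SimpleGraph V} {A B : Set V}

lemma isBlock_of_C1num_eq_zero [Finite V] (h : C1num G = 0) {c : G.ConnectedComponent}
    (hc : ¬IsIsolatedEdgeComp G c) : IsBlock G c.supp := by
  by_contra hb
  exact Nat.card_ne_zero.2 ⟨⟨⟨c, hc, hb⟩⟩, inferInstance⟩ h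

lemma existsUnique_isIsolatedEdgeComp (h : C2num G = 1) : ∃! c, IsIsolatedEdgeComp G c := by
  obtain ⟨⟨c, hc⟩, hunique⟩ := Nat.card_eq_one_iff_exists.1 h
  exact ⟨c, hc, fun c' hc' => congrArg Subtype.val (hunique ⟨c', hc'⟩)⟩

lemma IsIsolatedEdgeComp.exists_mem_mem
    (hbip : ∀ u v, G.Adj u v → (u ∈ A ∧ v ∈ B) ∨ (u ∈ B ∧ v ∈ A))
    {c : G.ConnectedComponent} (hc : IsIsolatedEdgeComp G c) :
    ∃ u ∈ A, ∃ v ∈ B, G.Adj u v ∧ c.supp = {u, v} := by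
  obtain ⟨u, v, huv, hc⟩ := hc
  rcases hbip u v huv with ⟨hu, hv⟩ | ⟨hu, hv⟩
  · exact ⟨u, hu, v, hv, huv, hc⟩
  · exact ⟨v, hv, u, hu, huv.symm, hc.trans (Set.pair_comm u v)⟩

lemma exists_mem_mem_of_one_lt_ncard [Finite V]
    (hbip : ∀ u v, G.Adj u v → (u ∈ A ∧ v ∈ B) ∨ (u ∈ B ∧ v ∈ A))
    {c : G.ConnectedComponent} (hc : 1 < c.supp.ncard) :
    ∃ a ∈ A, ∃ b ∈ B, a ∈ c.supp ∧ b ∈ c.supp := by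
  obtain ⟨x, y, hx, hy, hxy⟩ := (Set.one_lt_ncard_iff c.supp.toFinite).1 hc
  obtain ⟨p⟩ := c.reachable_of_mem_supp hx hy
  have hadj := p.adj_snd (Walk.not_nil_of_ne hxy)
  have hz := c.mem_supp_of_adj_mem_supp hx hadj
  rcases hbip x _ hadj with ⟨hxA, hzB⟩ | ⟨hxB, hzA⟩
  · exact ⟨x, hxA, _, hzB, hx, hz⟩
  · exact ⟨_, hzA, x, hxB, hz, hx⟩

lemma reachable_sup_fromEdgeSet {L : Set (Sym2 V)} {M : Set V}
    (hM : ∀ x y, G.Reachable x y → x ∈ M → y ∈ M) (hL : ∀ e ∈ L, ∀ x ∈ e, x ∈ M)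
    {x y : V} (h : (G ⊔ fromEdgeSet L).Reachable x y) : (x ∈ M ∧ y ∈ M) ∨ G.Reachable x y := by
  obtain ⟨p⟩ := h
  induction p with
  | nil => exact Or.inr Reachable.rfl
  | @cons x z y hxz _ ih =>
    rw [sup_adj, fromEdgeSet_adj] at hxz
    rcases hxz with hxz | ⟨hxz, -⟩
    · rcases ih with ⟨hz, hy⟩ | hzy
      · exact Or.inl ⟨hM z x hxz.symm.reachable hz, hy⟩
      · exact Or.inr (hxz.reachable.trans hzy)
    · have hx := hL _ hxz x (Sym2.mem_mk_left x z)
      have hz := hL _ hxz z (Sym2.mem_mk_right x z)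
      rcases ih with ⟨-, hy⟩ | hzy
      · exact Or.inl ⟨hx, hy⟩
      · exact Or.inl ⟨hx, hM z y hzy hz⟩

theorem exists_biconnector_of_ear (hdisj : Disjoint A B) {c₀ d : G.ConnectedComponent}
    (hblock : ∀ c, c ≠ c₀ → IsBlock G c.supp) {u v a b : V} (huv : G.Adj u v)
    (hc₀ : c₀.supp = {u, v}) (hu : u ∈ A) (hv : v ∈ B) (hd : IsBlock G d.supp)
    (ha : a ∈ A) (hb : b ∈ B) (had : a ∈ d.supp) (hbd : b ∈ d.supp) :
    ∃ L, IsBiconnector G A B L ∧ L.ncard = 2 := by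
  have hu₀ : u ∈ c₀.supp := hc₀ ▸ Set.mem_insert u {v}
  have hv₀ : v ∈ c₀.supp := hc₀ ▸ Set.mem_insert_of_mem u rfl
  have hdc : d ≠ c₀ := fun h => IsIsolatedEdgeComp.not_isBlock ⟨u, v, huv, hc₀⟩ (h ▸ hd)
  have hud : u ∉ d.supp := fun h => hdc (ConnectedComponent.eq_of_common_vertex h hu₀)
  have hvd : v ∉ d.supp := fun h => hdc (ConnectedComponent.eq_of_common_vertex h hv₀)
  have hub : ¬G.Adj u b := fun h => hvd (eq_of_adj_of_supp_eq_pair hc₀ h ▸ hbd)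
  have hav : ¬G.Adj a v := fun h =>
    hud (eq_of_adj_of_supp_eq_pair (hc₀.trans (Set.pair_comm u v)) h.symm ▸ had)
  set L : Set (Sym2 V) := {s(u, b), s(a, v)}
  set M : Set V := c₀.supp ∪ d.supp
  have hGH : G ≤ G ⊔ fromEdgeSet L := le_sup_left
  have hHub : (G ⊔ fromEdgeSet L).Adj u b :=
    Or.inr ((fromEdgeSet_adj _).2 ⟨by simp [L], fun h => hud (h ▸ hbd)⟩)
  have hHav : (G ⊔ fromEdgeSet L).Adj a v :=
    Or.inr ((fromEdgeSet_adj _).2 ⟨by simp [L], fun h => hvd (h ▸ had)⟩)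
  have hear : BiconnSet (G ⊔ fromEdgeSet L) M := by
    simp only [M, hc₀]
    exact BiconnSet.union_ear hGH hd.2.1 had hbd (hdisj.ne_of_mem ha hb) hud hvd (hGH huv)
      hHub hHav
  have hM : ∀ x y, G.Reachable x y → x ∈ M → y ∈ M := fun x y hxy =>
    Or.imp (fun hx => (ConnectedComponent.sound hxy).symm.trans hx)
      (fun hx => (ConnectedComponent.sound hxy).symm.trans hx)
  have hL : ∀ e ∈ L, ∀ x ∈ e, x ∈ M := by
    rintro e (rfl | rfl) x hx <;> rcases Sym2.mem_iff.1 hx with rfl | rfl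
    exacts [Or.inl hu₀, Or.inr hbd, Or.inr had, Or.inl hv₀]
  refine ⟨L, ⟨?_, componentwiseBiconnected_iff.2 fun x y hxy => ?_⟩, Set.ncard_pair ?_⟩
  · rintro e (rfl | rfl)
    exacts [⟨u, b, rfl, hu, hb, hub⟩, ⟨a, v, rfl, ha, hv, hav⟩]
  · rcases reachable_sup_fromEdgeSet hM hL hxy with ⟨hx, hy⟩ | hxy
    · exact hear x hx y hy
    · by_cases hx : x ∈ c₀.supp
      · exact hear x (Or.inl hx) y (hM x y hxy (Or.inl hx))
      · exact ((hblock _ hx).2.1 x rfl y (ConnectedComponent.sound hxy).symm).mono hGH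
  · have hua : u ≠ a := fun h => hud (h ▸ had)
    simp [huv.ne, hua]

end Components

theorem stmt_11_general [Fintype V] (G : SimpleGraph V) (A B : Set V)
    (hdisj : Disjoint A B)
    (hbip : ∀ u v : V, G.Adj u v → (u ∈ A ∧ v ∈ B) ∨ (u ∈ B ∧ v ∈ A))
    (hC1 : C1num G = 0) (hC2 : C2num G = 1) (hC3 : 0 < C3num G) :
    Bnum G A B = 2 := by
  obtain ⟨c₀, hc₀, hc₀_unique⟩ := existsUnique_isIsolatedEdgeComp hC2
  obtain ⟨u, hu, v, hv, huv, hc₀uv⟩ := hc₀.exists_mem_mem hbip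
  obtain ⟨⟨d, hd, hd_card⟩⟩ := (Nat.card_pos_iff.1 hC3).1
  obtain ⟨a, ha, b, hb, had, hbd⟩ := exists_mem_mem_of_one_lt_ncard hbip hd_card
  have hblock : ∀ c, c ≠ c₀ → IsBlock G c.supp := fun c hc =>
    isBlock_of_C1num_eq_zero hC1 (mt (hc₀_unique c) hc)
  refine IsLeast.csInf_eq
    ⟨exists_biconnector_of_ear hdisj hblock huv hc₀uv hu hv hd ha hb had hbd, ?_⟩
  rintro k ⟨L, hL, rfl⟩
  exact hc₀.two_le_ncard hL.2

theorem stmt_11 [Fintype V] (G : SimpleGraph V) (A B : Set V)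
    (hdisj : Disjoint A B) (hcov : A ∪ B = Set.univ)
    (hbip : ∀ u v : V, G.Adj u v → (u ∈ A ∧ v ∈ B) ∨ (u ∈ B ∧ v ∈ A))
    (hA : 2 ≤ A.ncard) (hB : 2 ≤ B.ncard)
    (hC1 : C1num G = 0) (hC2 : C2num G = 1) (hC3 : 0 < C3num G) :
    Bnum G A B = 2 :=
  stmt_11_general G A B hdisj hbip hC1 hC2 hC3

end
end AugBic
end

section
/- Let G=(A,B,E) be a connected bipartite graph with |Λ(G)| > 3. Then G has at most two critical vertices, and if it has exactly two critical vertices then R(Λ(G)) = 0. -/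
open SimpleGraph

namespace AugBic

noncomputable section

variable {V : Type*}

/-!
Every branch of a cut vertex `u` (a component of `G - u`) meets a pendant block away from `u`:
among the branches `K` of vertices `w` nested inside it, one of minimal size contains no cut
vertex of `G`, and then either `K` is a single vertex of degree one, or no single vertex separates
`K ∪ {w}`, which is then a block whose only cut vertex is `w`.

A block meets at most one branch of any vertex, and a pendant block meeting a branch of `u` that
avoids a cut vertex `v ≠ u` cannot also meet a branch of `v` that avoids `u`. Counting gives
`(D(u) - 1) + (D(v) - 1) ≤ |Λ(G)|` for distinct cut vertices and, for three of them,
`(D(u) - 2) + (D(v) - 1) + (D(w) - 1) ≤ |Λ(G)|` when neither `v` nor `w` separates `u` from the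
other. A critical vertex has `D - 1 = M + R`, where `|Λ(G)| = 2M + R` unless `R = 0`; so two
critical vertices force `R = 0`, and three force `|Λ(G)| ≤ 2`.
-/

def ReachableAvoiding (G : SimpleGraph V) (w x y : V) : Prop :=
  ∃ p : G.Walk x y, w ∉ p.support

namespace ReachableAvoiding

variable {G : SimpleGraph V} {w x y z : V}

theorem refl (h : x ≠ w) : ReachableAvoiding G w x x :=
  ⟨.nil, by simpa using h.symm⟩

theorem symm : ReachableAvoiding G w x y → ReachableAvoiding G w y x
  | ⟨p, hp⟩ => ⟨p.reverse, by simpa using hp⟩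

theorem trans : ReachableAvoiding G w x y → ReachableAvoiding G w y z →
    ReachableAvoiding G w x z
  | ⟨p, hp⟩, ⟨q, hq⟩ => ⟨p.append q, by simp [Walk.mem_support_append_iff, hp, hq]⟩

theorem ne_left : ReachableAvoiding G w x y → x ≠ w
  | ⟨p, hp⟩ => by rintro rfl; exact hp p.start_mem_support

theorem reachable : ReachableAvoiding G w x y → G.Reachable x y
  | ⟨p, _⟩ => ⟨p⟩

theorem reachable_deleteEdges {e : Sym2 V} (h : ReachableAvoiding G w x y) (he : w ∈ e) :
    (G.deleteEdges {e}).Reachable x y := by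
  obtain ⟨p, hp⟩ := h
  obtain ⟨b, rfl⟩ := Sym2.mem_iff_exists.1 he
  refine ⟨p.toDeleteEdges {s(w, b)} fun e he' he => hp ?_⟩
  rw [Set.mem_singleton_iff] at he
  exact p.fst_mem_support_of_mem_edges (he ▸ he')

end ReachableAvoiding

section Separation

variable {G : SimpleGraph V} {w x y z : V}

theorem _root_.SimpleGraph.Adj.reachableAvoiding (h : G.Adj x y) (hx : x ≠ w) (hy : y ≠ w) :
    ReachableAvoiding G w x y :=
  ⟨h.toWalk, by simp [hx.symm, hy.symm]⟩

theorem reachableAvoiding_iff_induce (hx : x ≠ w) (hy : y ≠ w) :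
    ReachableAvoiding G w x y ↔ (G.induce {v | v ≠ w}).Reachable ⟨x, hx⟩ ⟨y, hy⟩ := by
  constructor
  · rintro ⟨p, hp⟩
    exact ⟨p.induce {v | v ≠ w} fun v hv => by rintro rfl; exact hp hv⟩
  · rintro ⟨p⟩
    refine ⟨p.map (Embedding.induce {v | v ≠ w}).toHom, fun hw => ?_⟩
    obtain ⟨v, -, hv⟩ := List.mem_map.1 ((Walk.support_map _ p) ▸ hw)
    exact v.2 hv

theorem BiconnPair.reachableAvoiding (h : BiconnPair G x y) (hx : x ≠ w) (hy : y ≠ w) :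
    ReachableAvoiding G w x y :=
  (reachableAvoiding_iff_induce hx hy).2 (h.2.2 w hx hy)

theorem reachableAvoiding_of_not_reachableAvoiding (hconn : G.Connected) (hzw : z ≠ w)
    (h : ¬ReachableAvoiding G z x w) : ReachableAvoiding G w x z := by
  classical
  obtain ⟨p, hp⟩ := hconn.exists_isPath x w
  have hz : z ∈ p.support := by
    by_contra hz
    exact h ⟨p, hz⟩
  exact ⟨p.takeUntil z hz, p.endpoint_notMem_support_takeUntil hp hz hzw.symm⟩

theorem not_isCutVertex_iff [Finite V] (hconn : G.Connected) :
    ¬IsCutVertex G w ↔ ∀ x y, x ≠ w → y ≠ w → ReachableAvoiding G w x y := by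
  have hone : Nat.card G.ConnectedComponent = 1 := by
    have := hconn.preconnected.subsingleton_connectedComponent
    have := hconn.nonempty
    exact Nat.card_unique
  rw [IsCutVertex, hone, not_lt, Finite.card_le_one_iff_subsingleton]
  constructor
  · intro _ x y hx hy
    exact (reachableAvoiding_iff_induce hx hy).2 (ConnectedComponent.exact (Subsingleton.elim _ _))
  · intro h
    constructor
    rintro ⟨⟨x, hx⟩⟩ ⟨⟨y, hy⟩⟩
    exact ConnectedComponent.sound ((reachableAvoiding_iff_induce hx hy).1 (h x y hx hy))

theorem dnum_eq_card (hconn : G.Connected) (v : V) :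
    Dnum G v = Nat.card (G.induce {z | z ≠ v}).ConnectedComponent := by
  have : {z | G.Reachable v z ∧ z ≠ v} = {z | z ≠ v} :=
    Set.ext fun z => and_iff_right (hconn.preconnected v z)
  rw [Dnum, this]

end Separation

section Blocks

variable {G : SimpleGraph V} {S : Set V} {w a : V}

theorem exists_mem_ne_ne_of_two_lt_ncard (hS : 2 < S.ncard) (p q : V) :
    ∃ r ∈ S, r ≠ p ∧ r ≠ q := by
  by_contra! h
  have hsub : S ⊆ {p, q} := fun r hr => by
    by_cases hrp : r = p
    · exact Or.inl hrp
    · exact Or.inr (h r hr hrp)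
  have := (Set.ncard_le_ncard hsub).trans (Set.ncard_insert_le p {q})
  rw [Set.ncard_singleton] at this
  omega

theorem biconnSet_of_forall_reachableAvoiding (hS : 2 < S.ncard)
    (h : ∀ z, ∀ p ∈ S, ∀ q ∈ S, p ≠ z → q ≠ z → ReachableAvoiding G z p q) :
    BiconnSet G S := by
  intro p hp q hq
  obtain ⟨r, hr, hrp, hrq⟩ := exists_mem_ne_ne_of_two_lt_ncard hS p q
  refine ⟨(h r p hp q hq hrp.symm hrq.symm).reachable, fun e he => ?_,
    fun w hpw hqw => (reachableAvoiding_iff_induce hpw hqw).1 (h w p hp q hq hpw hqw)⟩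
  by_cases hz : ∃ z ∈ e, z ≠ p ∧ z ≠ q
  · obtain ⟨z, hze, hzp, hzq⟩ := hz
    exact (h z p hp q hq hzp.symm hzq.symm).reachable_deleteEdges hze
  · -- `e = s(p, q)`: go around through `r`
    push Not at hz
    obtain rfl | hne := eq_or_ne p q
    · exact .refl _
    have hpq : p ∈ e ∧ q ∈ e := by
      induction e using Sym2.ind with
      | _ c d =>
        have hcd : c ≠ d := G.ne_of_adj he
        have := hz c (Sym2.mem_mk_left c d)
        have := hz d (Sym2.mem_mk_right c d)
        grind
    exact ((h q p hp r hr hne hrq).reachable_deleteEdges hpq.2).trans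
      ((h p r hr q hq hrp hne.symm).reachable_deleteEdges hpq.1)

theorem isBlock_singleton_of_neighborSet_eq (h : G.neighborSet a = {w}) : IsBlock G {a} := by
  refine ⟨Set.singleton_nonempty a, ?_, fun T hT hbT => ?_⟩
  · rintro x rfl y rfl
    exact ⟨.refl _, fun _ _ => .refl _, fun _ _ _ => .refl _⟩
  refine Set.eq_singleton_iff_unique_mem.2 ⟨hT rfl, fun t ht => ?_⟩
  have hadj : G.Adj a w := by
    rw [← mem_neighborSet, h]
    rfl
  obtain ⟨p⟩ := (hbT a (hT rfl) t ht).2.1 s(a, w) hadj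
  cases p with
  | nil => rfl
  | cons hn _ =>
    rw [deleteEdges_adj] at hn
    have hnw : _ ∈ G.neighborSet a := hn.1
    rw [h, Set.mem_singleton_iff] at hnw
    exact (hn.2 (by rw [hnw]; rfl)).elim

end Blocks

section Branch

variable {G : SimpleGraph V} {u w a x y z p q : V}

/-- The vertex set of the component of `G - w` containing `a`; empty when `a = w`. -/
def branch (G : SimpleGraph V) (w a : V) : Set V :=
  {y | ReachableAvoiding G w y a}

theorem mem_branch_self (h : a ≠ w) : a ∈ branch G w a :=
  ReachableAvoiding.refl h

theorem ne_of_mem_branch (h : y ∈ branch G w a) : y ≠ w :=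
  ReachableAvoiding.ne_left h

theorem branch_subset_branch (hconn : G.Connected) (hz : z ∈ branch G w a)
    (hy : ¬ReachableAvoiding G z y w) : branch G z y ⊆ branch G w a := fun _ ht =>
  (reachableAvoiding_of_not_reachableAvoiding hconn (ne_of_mem_branch hz)
    fun htw => hy (ht.symm.trans htw)).trans hz

theorem reachableAvoiding_of_not_mem_insert_branch (hconn : G.Connected)
    (hz : z ∉ insert w (branch G w a)) (hp : p ∈ insert w (branch G w a)) :
    ReachableAvoiding G z p a := by
  have hzw : z ≠ w := fun h => hz (Or.inl h)
  have hzK : z ∉ branch G w a := fun h => hz (Or.inr h)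
  rcases hp with rfl | ⟨q, hq⟩
  · by_contra h
    exact hzK (reachableAvoiding_of_not_reachableAvoiding hconn hzw fun h' => h h'.symm).symm
  · classical
    exact ⟨q, fun hzq => hzK ⟨q.dropUntil z hzq,
      fun hw => hq (q.support_dropUntil_subset_support hzq hw)⟩⟩

theorem reachableAvoiding_of_mem_insert_branch [Finite V] (hconn : G.Connected)
    (hK : ∀ z ∈ branch G w a, ¬IsCutVertex G z)
    (hp : p ∈ insert w (branch G w a)) (hq : q ∈ insert w (branch G w a))
    (hpz : p ≠ z) (hqz : q ≠ z) : ReachableAvoiding G z p q := by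
  by_cases hzS : z ∈ insert w (branch G w a)
  · rcases hzS with rfl | hzK
    · exact (hp.resolve_left hpz).trans (hq.resolve_left hqz).symm
    · exact (not_isCutVertex_iff hconn).1 (hK z hzK) p q hpz hqz
  · exact (reachableAvoiding_of_not_mem_insert_branch hconn hzS hp).trans
      (reachableAvoiding_of_not_mem_insert_branch hconn hzS hq).symm

theorem isBlock_insert_branch (haw : a ≠ w) (hS : BiconnSet G (insert w (branch G w a))) :
    IsBlock G (insert w (branch G w a)) := by
  refine ⟨Set.insert_nonempty _ _, hS, fun T hT hbT => Set.Subset.antisymm (fun t ht => ?_) hT⟩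
  by_cases htw : t = w
  · exact Or.inl htw
  · exact Or.inr ((hbT a (hT (Or.inr (mem_branch_self haw))) t ht).reachableAvoiding haw htw).symm

theorem neighborSet_eq_of_branch_eq_singleton (hconn : G.Connected) (haw : a ≠ w)
    (h : branch G w a = {a}) : G.neighborSet a = {w} := by
  have hnbr : ∀ n, G.Adj a n → n = w := fun n hn => by
    by_contra hnw
    have : n ∈ branch G w a := hn.symm.reachableAvoiding hnw haw
    rw [h, Set.mem_singleton_iff] at this
    exact hn.ne this.symm
  obtain ⟨p⟩ := hconn.preconnected a w
  cases p with
  | nil => exact absurd rfl haw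
  | cons hadj _ =>
    exact Set.eq_singleton_iff_unique_mem.2 ⟨hnbr _ hadj ▸ hadj, hnbr⟩

theorem exists_pendantBlock_of_branch [Finite V] (hconn : G.Connected) (hw : IsCutVertex G w)
    (haw : a ≠ w) (hK : ∀ z ∈ branch G w a, ¬IsCutVertex G z) :
    ∃ S ∈ pendantBlocks G, a ∈ S := by
  by_cases hsingle : branch G w a = {a}
  · have hnbr := neighborSet_eq_of_branch_eq_singleton hconn haw hsingle
    exact ⟨{a}, ⟨isBlock_singleton_of_neighborSet_eq hnbr,
      Or.inl ⟨a, rfl, by rw [hnbr, Set.ncard_singleton]⟩⟩, rfl⟩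
  obtain ⟨b, hb, hba⟩ : ∃ b ∈ branch G w a, b ≠ a := by
    by_contra! h
    exact hsingle (Set.eq_singleton_iff_unique_mem.2 ⟨mem_branch_self haw, h⟩)
  have h3 : 2 < (insert w (branch G w a)).ncard :=
    (Set.two_lt_ncard_iff (Set.toFinite _)).2 ⟨w, a, b, Or.inl rfl, Or.inr (mem_branch_self haw),
      Or.inr hb, haw.symm, (ne_of_mem_branch hb).symm, hba.symm⟩
  have hblock := isBlock_insert_branch haw <| biconnSet_of_forall_reachableAvoiding h3
    fun z p hp q hq hpz hqz => reachableAvoiding_of_mem_insert_branch hconn hK hp hq hpz hqz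
  refine ⟨_, ⟨hblock, Or.inr ⟨by omega, w, ⟨Or.inl rfl, hw⟩, ?_⟩⟩,
    Or.inr (mem_branch_self haw)⟩
  rintro v ⟨rfl | hv, hcut⟩
  · rfl
  · exact absurd hcut (hK v hv)

theorem exists_pendantBlock_mem_branch [Finite V] (hconn : G.Connected) (hu : IsCutVertex G u)
    (hx : x ≠ u) : ∃ S ∈ pendantBlocks G, ∃ y ∈ S, y ∈ branch G u x := by
  suffices h : ∀ n w a, (branch G w a).ncard = n → a ≠ w → branch G w a ⊆ branch G u x →
      ∃ S ∈ pendantBlocks G, ∃ y ∈ S, y ∈ branch G u x from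
    h _ u x rfl hx subset_rfl
  intro n
  induction n using Nat.strong_induction_on with
  | _ n ih =>
  rintro w a rfl haw hsub
  by_cases hsplit : ∃ z ∈ branch G w a, ∃ y ≠ z, ¬ReachableAvoiding G z y w
  · obtain ⟨z, hz, y, hyz, hy⟩ := hsplit
    have hnest := branch_subset_branch hconn hz hy
    have hlt : (branch G z y).ncard < (branch G w a).ncard :=
      Set.ncard_lt_ncard ((Set.ssubset_iff_of_subset hnest).2 ⟨z, hz, fun h => h.ne_left rfl⟩)
    exact ih _ hlt z y rfl hyz (hnest.trans hsub)
  push Not at hsplit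
  have hw : IsCutVertex G w := by
    rcases eq_or_ne w u with rfl | hwu
    · exact hu
    · by_contra hnc
      exact (hsub ((not_isCutVertex_iff hconn).1 hnc u a hwu.symm haw)).ne_left rfl
  have hK : ∀ z ∈ branch G w a, ¬IsCutVertex G z := fun z hz =>
    (not_isCutVertex_iff hconn).2 fun p q hp hq => (hsplit z hz p hp).trans (hsplit z hz q hq).symm
  obtain ⟨S, hS, haS⟩ := exists_pendantBlock_of_branch hconn hw haw hK
  exact ⟨S, hS, a, haS, hsub (mem_branch_self haw)⟩

end Branch

section Counting

variable {G : SimpleGraph V} {u v w : V} {Y Z : Set V}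

def pendantsBeyond (G : SimpleGraph V) (v : V) (Y : Set V) : Set (Set V) :=
  {S | IsPendantBlock G S ∧ ∃ x ∈ S, x ≠ v ∧ ∀ y ∈ Y, ¬ReachableAvoiding G v x y}

theorem pendantsBeyond_subset_pendantBlocks (G : SimpleGraph V) (v : V) (Y : Set V) :
    pendantsBeyond G v Y ⊆ pendantBlocks G :=
  fun _ hS => hS.1

theorem pendantsBeyond_subset_insert (h : ReachableAvoiding G v u w) (hu : u ∈ Y) :
    pendantsBeyond G v Y ⊆ pendantsBeyond G v (insert w Y) := by
  rintro S ⟨hS, x, hxS, hxv, hx⟩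
  refine ⟨hS, x, hxS, hxv, fun y hy => ?_⟩
  rcases hy with rfl | hy
  · exact fun hxy => hx u hu (hxy.trans h.symm)
  · exact hx y hy

theorem dnum_sub_ncard_le_ncard_pendantsBeyond [Finite V] (hconn : G.Connected)
    (hv : IsCutVertex G v) (Y : Set V) :
    Dnum G v - Y.ncard ≤ (pendantsBeyond G v Y).ncard := by
  classical
  rw [dnum_eq_card hconn]
  set H := G.induce {z | z ≠ v}
  have hpick : ∀ c : H.ConnectedComponent, ∃ S ∈ pendantBlocks G, ∃ x ∈ S,
      ∃ hx : x ≠ v, H.connectedComponentMk ⟨x, hx⟩ = c := by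
    rintro ⟨⟨x₀, hx₀⟩⟩
    obtain ⟨S, hS, x, hxS, hx⟩ := exists_pendantBlock_mem_branch hconn hv hx₀
    exact ⟨S, hS, x, hxS, hx.ne_left,
      ConnectedComponent.sound ((reachableAvoiding_iff_induce _ _).1 hx)⟩
  choose S hS x hxS hxv hxc using hpick
  have hsame : ∀ c c', ReachableAvoiding G v (x c) (x c') → c = c' := fun c c' h => by
    rw [← hxc c, ← hxc c']
    exact ConnectedComponent.sound ((reachableAvoiding_iff_induce _ _).1 h)
  have hinj : Function.Injective S := fun c c' h =>
    hsame c c' ((hS c).1.2.1 _ (hxS c) _ (h ▸ hxS c') |>.reachableAvoiding (hxv c) (hxv c'))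
  set good := {c | ∀ y ∈ Y, ¬ReachableAvoiding G v (x c) y}
  have hgood : good.ncard ≤ (pendantsBeyond G v Y).ncard := by
    rw [← Set.ncard_image_of_injective good hinj]
    exact Set.ncard_le_ncard (Set.image_subset_iff.2 fun c hc => ⟨hS c, x c, hxS c, hxv c, hc⟩)
  have hbad : goodᶜ.ncard ≤ Y.ncard := by
    have hreach : ∀ c ∈ goodᶜ, ∃ y ∈ Y, ReachableAvoiding G v (x c) y := by
      simp [good]
    have := hconn.nonempty
    choose! f hfY hf using hreach
    exact Set.ncard_le_ncard_of_injOn f hfY fun c hc c' hc' h =>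
      hsame c c' ((hf c hc).trans (h ▸ hf c' hc').symm)
  have := Set.ncard_add_ncard_compl good
  omega

theorem disjoint_pendantsBeyond (hconn : G.Connected) (huv : u ≠ v) (hv : v ∈ Y)
    (hu : u ∈ Z) :
    Disjoint (pendantsBeyond G u Y) (pendantsBeyond G v Z) := by
  refine Set.disjoint_left.2 ?_
  rintro S ⟨hS, x, hxS, hxu, hx⟩ ⟨-, y, hyS, -, hy⟩
  have hyu : y ≠ u := by
    rintro rfl
    exact hy y hu (.refl huv)
  have hyv : ¬ReachableAvoiding G u y v := fun h =>
    hx v hv ((hS.1.2.1 x hxS y hyS).reachableAvoiding hxu hyu |>.trans h)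
  exact hy u hu (reachableAvoiding_of_not_reachableAvoiding hconn huv hyv)

theorem dnum_sub_one_add_dnum_sub_one_le [Finite V] (hconn : G.Connected) (huv : u ≠ v)
    (hu : IsCutVertex G u) (hv : IsCutVertex G v) :
    (Dnum G u - 1) + (Dnum G v - 1) ≤ (pendantBlocks G).ncard := by
  have hu' := dnum_sub_ncard_le_ncard_pendantsBeyond hconn hu {v}
  have hv' := dnum_sub_ncard_le_ncard_pendantsBeyond hconn hv {u}
  have hunion := Set.ncard_le_ncard (Set.union_subset
    (pendantsBeyond_subset_pendantBlocks G u {v}) (pendantsBeyond_subset_pendantBlocks G v {u}))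
  rw [Set.ncard_union_eq (disjoint_pendantsBeyond hconn huv (Set.mem_singleton v)
    (Set.mem_singleton u))] at hunion
  rw [Set.ncard_singleton] at hu' hv'
  omega

theorem dnum_sub_two_add_le_of_reachableAvoiding [Finite V] (hconn : G.Connected) (huv : u ≠ v)
    (huw : u ≠ w) (hvw : v ≠ w) (hu : IsCutVertex G u) (hv : IsCutVertex G v)
    (hw : IsCutVertex G w) (hvu : ReachableAvoiding G v u w) (hwu : ReachableAvoiding G w u v) :
    (Dnum G u - 2) + (Dnum G v - 1) + (Dnum G w - 1) ≤ (pendantBlocks G).ncard := by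
  have hu' := dnum_sub_ncard_le_ncard_pendantsBeyond hconn hu {v, w}
  have hv' := (dnum_sub_ncard_le_ncard_pendantsBeyond hconn hv {u}).trans
    (Set.ncard_le_ncard (pendantsBeyond_subset_insert hvu rfl))
  have hw' := (dnum_sub_ncard_le_ncard_pendantsBeyond hconn hw {u}).trans
    (Set.ncard_le_ncard (pendantsBeyond_subset_insert hwu rfl))
  have hdisj₁ : Disjoint (pendantsBeyond G u {v, w}) (pendantsBeyond G v {w, u}) :=
    disjoint_pendantsBeyond hconn huv (by simp) (by simp)
  have hdisj₂ : Disjoint (pendantsBeyond G u {v, w} ∪ pendantsBeyond G v {w, u})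
      (pendantsBeyond G w {v, u}) :=
    Set.disjoint_union_left.2 ⟨disjoint_pendantsBeyond hconn huw (by simp) (by simp),
      disjoint_pendantsBeyond hconn hvw (by simp) (by simp)⟩
  have hunion := Set.ncard_le_ncard (Set.union_subset (Set.union_subset
    (pendantsBeyond_subset_pendantBlocks G u {v, w})
    (pendantsBeyond_subset_pendantBlocks G v {w, u}))
    (pendantsBeyond_subset_pendantBlocks G w {v, u}))
  rw [Set.ncard_union_eq hdisj₂, Set.ncard_union_eq hdisj₁] at hunion
  rw [Set.ncard_pair hvw] at hu'
  rw [Set.ncard_singleton] at hv' hw'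
  omega

theorem dnum_sub_one_add_dnum_sub_one_add_dnum_sub_one_le [Finite V] (hconn : G.Connected)
    (huv : u ≠ v) (huw : u ≠ w) (hvw : v ≠ w) (hu : IsCutVertex G u) (hv : IsCutVertex G v)
    (hw : IsCutVertex G w) :
    (Dnum G u - 1) + (Dnum G v - 1) + (Dnum G w - 1) ≤ (pendantBlocks G).ncard + 1 := by
  -- a vertex separating the other two is separated from neither of them by the other
  by_cases hvu : ReachableAvoiding G v u w
  · by_cases hwu : ReachableAvoiding G w u v
    · have := dnum_sub_two_add_le_of_reachableAvoiding hconn huv huw hvw hu hv hw hvu hwu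
      omega
    · have := dnum_sub_two_add_le_of_reachableAvoiding hconn huw.symm hvw.symm huv hw hu hv
        (reachableAvoiding_of_not_reachableAvoiding hconn huw.symm fun h => hwu h.symm).symm
        (reachableAvoiding_of_not_reachableAvoiding hconn hvw.symm hwu).symm
      omega
  · have := dnum_sub_two_add_le_of_reachableAvoiding hconn huv.symm hvw huw hv hu hw
      (reachableAvoiding_of_not_reachableAvoiding hconn huv.symm fun h => hvu h.symm).symm
      (reachableAvoiding_of_not_reachableAvoiding hconn hvw hvu).symm
    omega

end Counting

theorem stmt_15_general [Fintype V] (G : SimpleGraph V) (A B : Set V)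
    (hconn : G.Connected) (hcard : 3 < (pendantBlocks G).ncard) :
    {u : V | Critical G A B u}.ncard ≤ 2 ∧
    ({u : V | Critical G A B u}.ncard = 2 → Rnum G A B (pendantBlocks G) = 0) := by
  have hR : Rnum G A B (pendantBlocks G) =
      (pendantBlocks G).ncard - 2 * maxMatching G A B (pendantBlocks G) := rfl
  have hpair : ∀ u v, Critical G A B u → Critical G A B v → u ≠ v →
      Rnum G A B (pendantBlocks G) = 0 := fun u v hu hv huv => by
    have := dnum_sub_one_add_dnum_sub_one_le hconn huv hu.1 hv.1
    have := hu.2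
    have := hv.2
    omega
  refine ⟨?_, fun h2 => ?_⟩
  · by_contra! h3
    obtain ⟨u, v, w, hu, hv, hw, huv, huw, hvw⟩ := (Set.two_lt_ncard_iff (Set.toFinite _)).1 h3
    have := dnum_sub_one_add_dnum_sub_one_add_dnum_sub_one_le hconn huv huw hvw hu.1 hv.1 hw.1
    have := hpair u v hu hv huv
    have := hu.2
    have := hv.2
    have := hw.2
    omega
  · obtain ⟨u, v, huv, hset⟩ := Set.ncard_eq_two.1 h2
    rw [Set.ext_iff] at hset
    exact hpair u v ((hset u).2 (Or.inl rfl)) ((hset v).2 (Or.inr rfl)) huv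

theorem stmt_15 [Fintype V] (G : SimpleGraph V) (A B : Set V)
    (hdisj : Disjoint A B) (hcov : A ∪ B = Set.univ)
    (hbip : ∀ u v : V, G.Adj u v → (u ∈ A ∧ v ∈ B) ∨ (u ∈ B ∧ v ∈ A))
    (hconn : G.Connected) (hcard : 3 < (pendantBlocks G).ncard) :
    {u : V | Critical G A B u}.ncard ≤ 2 ∧
    ({u : V | Critical G A B u}.ncard = 2 → Rnum G A B (pendantBlocks G) = 0) :=
  stmt_15_general G A B hconn hcard

end
end AugBic
end
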